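/- arXiv:2511.11102 — 3 statements merged into one kernel-verified Lean document; each statement's English description precedes it below -/
import Mathlib

section
/- Two distinct symmetric 2×2 real matrices A and B are compatible (i.e. A − B = a ⊙ b for some nonzero a, b ∈ ℝ²) if and only if det(A − B) ≤ 0. -/
/-! `a ⊙ b` is the symmetric matrix of the quadratic form `z ↦ ⟪a, z⟫ ⟪b, z⟫`, and the form
`p x² + 2 q x y + r y²` of `!![p, q; q, r]` splits into two real linear factors exactly when
its discriminant `q² - p r = -det` is nonnegative. -/

open Matrix BigOperators

/-- The symmetrized outer product `a ⊙ b := (1/2)(a ⊗ b + b ⊗ a)`. -/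
noncomputable def odot {d : ℕ} (a b : Fin d → ℝ) : Matrix (Fin d) (Fin d) ℝ :=
  fun i j => (a i * b j + b i * a j) / 2

@[simp]
theorem odot_zero_left {d : ℕ} (b : Fin d → ℝ) : odot 0 b = 0 := by
  ext i j; simp [odot]

@[simp]
theorem odot_zero_right {d : ℕ} (a : Fin d → ℝ) : odot a 0 = 0 := by
  ext i j; simp [odot]

theorem odot_fin_two (a b : Fin 2 → ℝ) :
    odot a b = !![a 0 * b 0, (a 0 * b 1 + a 1 * b 0) / 2;
      (a 0 * b 1 + a 1 * b 0) / 2, a 1 * b 1] := by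
  ext i j; fin_cases i <;> fin_cases j <;> simp [odot] <;> ring

theorem det_odot_fin_two (a b : Fin 2 → ℝ) :
    (odot a b).det = -(a 0 * b 1 - a 1 * b 0) ^ 2 / 4 := by
  rw [odot_fin_two, det_fin_two_of]; ring

theorem det_odot_fin_two_nonpos (a b : Fin 2 → ℝ) : (odot a b).det ≤ 0 := by
  rw [det_odot_fin_two]; nlinarith [sq_nonneg (a 0 * b 1 - a 1 * b 0)]

theorem Matrix.IsSymm.eq_fin_two {M : Matrix (Fin 2) (Fin 2) ℝ} (hM : M.IsSymm) :
    M = !![M 0 0, M 0 1; M 0 1, M 1 1] := by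
  conv_lhs => rw [eta_fin_two M, hM.apply 0 1]

theorem exists_odot_eq_of_le_sq {p q r : ℝ} (h : p * r ≤ q ^ 2) :
    ∃ a b : Fin 2 → ℝ, !![p, q; q, r] = odot a b := by
  by_cases hp : p = 0
  · refine ⟨![0, 1], ![2 * q, r], ?_⟩
    rw [odot_fin_two, hp]; ext i j; fin_cases i <;> fin_cases j <;> simp
  · -- `p x² + 2 q x y + r y² = (p x + (q + s) y) (x + (q - s) / p * y)` with `s² = q² - p r`
    set s := √(q ^ 2 - p * r)
    have hs : s ^ 2 = q ^ 2 - p * r := Real.sq_sqrt (by linarith)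
    refine ⟨![p, q + s], ![1, (q - s) / p], ?_⟩
    rw [odot_fin_two]; ext i j; fin_cases i <;> fin_cases j <;> simp <;> field_simp
    · ring
    · ring
    · linear_combination hs

theorem Matrix.IsSymm.exists_odot_eq_of_det_nonpos {M : Matrix (Fin 2) (Fin 2) ℝ}
    (hM : M.IsSymm) (hdet : M.det ≤ 0) : ∃ a b : Fin 2 → ℝ, M = odot a b := by
  rw [hM.eq_fin_two, det_fin_two_of] at hdet
  rw [hM.eq_fin_two]
  exact exists_odot_eq_of_le_sq (by nlinarith)

/-- Two distinct symmetric `2×2` real matrices `A` and `B` are compatible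
(`A − B = a ⊙ b` for nonzero `a, b`) iff `det(A − B) ≤ 0`. -/
theorem compatible_iff_det_nonpos (A B : Matrix (Fin 2) (Fin 2) ℝ)
    (hA : A.IsSymm) (hB : B.IsSymm) (hAB : A ≠ B) :
    (∃ a b : Fin 2 → ℝ, a ≠ 0 ∧ b ≠ 0 ∧ A - B = odot a b) ↔ (A - B).det ≤ 0 := by
  constructor
  · rintro ⟨a, b, -, -, h⟩
    exact h ▸ det_odot_fin_two_nonpos a b
  · intro hdet
    obtain ⟨a, b, h⟩ := (hA.sub hB).exists_odot_eq_of_det_nonpos hdet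
    have hne : odot a b ≠ 0 := h ▸ sub_ne_zero.mpr hAB
    refine ⟨a, b, ?_, ?_, h⟩ <;> rintro rfl <;> simp at hne
end

section
/- Let p ∈ [2, ∞), let m, ℓ ∈ ℕ with 1 ≤ ℓ ≤ m, let k_ℓ ∈ {0,…,ℓ}, and consider positive functions r_0,…,r_ℓ of ε ∈ (0,1) with r_0 = 1. Suppose f : {1,…,ℓ} → {1,2} has exactly k_ℓ indices with f(i) = 1. Then there is a choice of the r_i (namely r_i determined by requiring all terms below to be comparable, with r_1^{(δ_{2,f(1)} + 2δ_{1,f(1)})} ∼ ε^{2/(2p + 2ℓ − k_ℓ)}) and a constant C > 0 such that ε r_ℓ^{-1} + Σ_{i: f(i)=1} (r_i/r_{i−1})^{2p} + Σ_{i: f(i)=2} (r_i/r_{i−1})^{p} ≤ C ε^{2p/(2p + 2(ℓ − k_ℓ) + k_ℓ)} for all ε ∈ (0,1). -/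
/-!
Take `r_i = ε ^ e_i` with increments `e_i - e_{i-1}` equal to `θ / (2p)` where `f i = 1` and
`θ / p` elsewhere. Then every term of the two sums is exactly `ε ^ θ`, while
`ε / r_ℓ = ε ^ (1 - (θ / p) (ℓ - k_ℓ / 2))`. The exponent `θ = 2p / (2p + 2(ℓ - k_ℓ) + k_ℓ)`
is the one that balances the two, so the whole left side is `≤ (ℓ + 1) ε ^ θ`.
-/

open Finset Real

theorem card_filter_add_card_filter_le {α : Type*} (s : Finset α) {P Q : α → Prop}
    [DecidablePred P] [DecidablePred Q] (h : ∀ x ∈ s, P x → ¬ Q x) :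
    #(s.filter P) + #(s.filter Q) ≤ #s := by
  have hQ : s.filter Q ⊆ s.filter (¬ P ·) := fun x hx => by
    rw [mem_filter] at hx ⊢
    exact ⟨hx.1, fun hPx => h x hx.1 hPx hx.2⟩
  have := card_le_card hQ
  have := s.card_filter_add_card_filter_not P
  omega

theorem sum_ite_half_one {α : Type*} (s : Finset α) (P : α → Prop) [DecidablePred P] :
    ∑ j ∈ s, (if P j then (1 : ℝ) / 2 else 1) = #s - #(s.filter P) / 2 := by
  rw [sum_ite, sum_const, sum_const, ← s.card_filter_add_card_filter_not P]
  simp only [nsmul_eq_mul, Nat.cast_add]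
  ring

theorem rpow_sum_Icc_div_rpow_sum_Icc_pred {ε : ℝ} (hε : 0 < ε) (w : ℕ → ℝ) {i : ℕ}
    (hi : 1 ≤ i) :
    ε ^ (∑ j ∈ Icc 1 i, w j) / ε ^ (∑ j ∈ Icc 1 (i - 1), w j) = ε ^ w i := by
  obtain ⟨n, rfl⟩ := Nat.exists_eq_add_of_le' hi
  rw [← rpow_sub hε, Nat.add_sub_cancel, sum_Icc_succ_top (by omega), add_sub_cancel_left]

theorem one_sub_div_mul_eq_of_balanced {p a k : ℝ} (hp : p ≠ 0)
    (hD : 2 * p + 2 * (a - k) + k ≠ 0) :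
    1 - 2 * p / (2 * p + 2 * (a - k) + k) / p * (a - k / 2) =
      2 * p / (2 * p + 2 * (a - k) + k) := by
  generalize hD' : 2 * p + 2 * (a - k) + k = D at hD ⊢
  field_simp
  linear_combination -hD'

noncomputable def balancedScale (p θ : ℝ) (f : ℕ → ℕ) (i : ℕ) (ε : ℝ) : ℝ :=
  ε ^ ∑ j ∈ Icc 1 i, θ / p * (if f j = 1 then 1 / 2 else 1)

namespace balancedScale

variable {p θ ε : ℝ} {f : ℕ → ℕ} {i : ℕ}

theorem zero : balancedScale p θ f 0 ε = 1 := by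
  simp [balancedScale]

theorem pos (hε : 0 < ε) : 0 < balancedScale p θ f i ε :=
  rpow_pos_of_pos hε _

theorem div_pred_rpow_of_eq_one (hp : p ≠ 0) (hε : 0 < ε) (hi : 1 ≤ i) (hfi : f i = 1) :
    (balancedScale p θ f i ε / balancedScale p θ f (i - 1) ε) ^ (2 * p) = ε ^ θ := by
  rw [balancedScale, balancedScale, rpow_sum_Icc_div_rpow_sum_Icc_pred hε _ hi, if_pos hfi,
    ← rpow_mul hε.le]
  field_simp

theorem div_pred_rpow_of_ne_one (hp : p ≠ 0) (hε : 0 < ε) (hi : 1 ≤ i) (hfi : f i ≠ 1) :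
    (balancedScale p θ f i ε / balancedScale p θ f (i - 1) ε) ^ p = ε ^ θ := by
  rw [balancedScale, balancedScale, rpow_sum_Icc_div_rpow_sum_Icc_pred hε _ hi, if_neg hfi,
    ← rpow_mul hε.le]
  field_simp

theorem sum_filter_eq_one_div_pred_rpow (hp : p ≠ 0) (hε : 0 < ε) (ℓ : ℕ) :
    ∑ i ∈ (Icc 1 ℓ).filter (f · = 1),
        (balancedScale p θ f i ε / balancedScale p θ f (i - 1) ε) ^ (2 * p) =
      #((Icc 1 ℓ).filter (f · = 1)) * ε ^ θ := by
  rw [← nsmul_eq_mul, ← sum_const]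
  refine sum_congr rfl fun i hi => ?_
  rw [mem_filter, mem_Icc] at hi
  exact div_pred_rpow_of_eq_one hp hε hi.1.1 hi.2

theorem sum_filter_eq_two_div_pred_rpow (hp : p ≠ 0) (hε : 0 < ε) (ℓ : ℕ) :
    ∑ i ∈ (Icc 1 ℓ).filter (f · = 2),
        (balancedScale p θ f i ε / balancedScale p θ f (i - 1) ε) ^ p =
      #((Icc 1 ℓ).filter (f · = 2)) * ε ^ θ := by
  rw [← nsmul_eq_mul, ← sum_const]
  refine sum_congr rfl fun i hi => ?_
  rw [mem_filter, mem_Icc] at hi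
  exact div_pred_rpow_of_ne_one hp hε hi.1.1 (by omega)

theorem mul_inv (hε : 0 < ε) (ℓ : ℕ) :
    ε * (balancedScale p θ f ℓ ε)⁻¹ =
      ε ^ (1 - θ / p * (ℓ - #((Icc 1 ℓ).filter (f · = 1)) / 2)) := by
  rw [balancedScale, ← mul_sum, sum_ite_half_one, Nat.card_Icc, Nat.add_sub_cancel,
    rpow_sub hε, rpow_one, div_eq_mul_inv ε]

end balancedScale

theorem heuristic_upper_bound_scaling_general (p : ℝ) (hp : 2 ≤ p)
    (ℓ : ℕ)
    (f : ℕ → ℕ)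
    (kℓ : ℕ) (hk : kℓ = ((Finset.Icc 1 ℓ).filter (fun i => f i = 1)).card) :
    ∃ r : ℕ → ℝ → ℝ, ∃ C : ℝ, 0 < C ∧
      (∀ ε ∈ Set.Ioo (0 : ℝ) 1, r 0 ε = 1 ∧ ∀ i ≤ ℓ, 0 < r i ε) ∧
      ∀ ε ∈ Set.Ioo (0 : ℝ) 1,
        ε * (r ℓ ε)⁻¹
          + (∑ i ∈ (Finset.Icc 1 ℓ).filter (fun i => f i = 1),
              (r i ε / r (i - 1) ε) ^ (2 * p))
          + (∑ i ∈ (Finset.Icc 1 ℓ).filter (fun i => f i = 2),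
              (r i ε / r (i - 1) ε) ^ p)
        ≤ C * ε ^ (2 * p / (2 * p + 2 * ((ℓ : ℝ) - (kℓ : ℝ)) + (kℓ : ℝ))) := by
  set θ := 2 * p / (2 * p + 2 * ((ℓ : ℝ) - (kℓ : ℝ)) + (kℓ : ℝ))
  have hp0 : p ≠ 0 := by positivity
  have hkℓ : (kℓ : ℝ) ≤ ℓ := by
    have := card_filter_le (Icc 1 ℓ) (f · = 1)
    rw [Nat.card_Icc, Nat.add_sub_cancel, ← hk] at this
    exact_mod_cast this
  have hbalance : 1 - θ / p * (ℓ - kℓ / 2) = θ :=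
    one_sub_div_mul_eq_of_balanced hp0 (by linarith)
  refine ⟨balancedScale p θ f, ℓ + 1, by positivity,
    fun ε hε => ⟨balancedScale.zero, fun _ _ => balancedScale.pos hε.1⟩, ?_⟩
  rintro ε ⟨hε, -⟩
  rw [balancedScale.mul_inv hε, ← hk, hbalance,
    balancedScale.sum_filter_eq_one_div_pred_rpow hp0 hε,
    balancedScale.sum_filter_eq_two_div_pred_rpow hp0 hε]
  have hcard : (#((Icc 1 ℓ).filter (f · = 1)) + #((Icc 1 ℓ).filter (f · = 2)) : ℝ) ≤ ℓ := by
    have := card_filter_add_card_filter_le (Icc 1 ℓ) (P := (f · = 1)) (Q := (f · = 2))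
      fun _ _ h1 h2 => by omega
    rw [Nat.card_Icc, Nat.add_sub_cancel] at this
    exact_mod_cast this
  nlinarith [rpow_pos_of_pos hε θ]

/-- Heuristic scaling of the upper bound: with `k_ℓ` the number of indices `i ∈ {1,…,ℓ}`
with `f(i) = 1`, there are positive length scales `r_i(ε)` with `r_0 = 1` and a constant
`C > 0` such that
`ε r_ℓ⁻¹ + Σ_{f(i)=1} (r_i/r_{i−1})^{2p} + Σ_{f(i)=2} (r_i/r_{i−1})^p
  ≤ C ε^{2p/(2p + 2(ℓ−k_ℓ) + k_ℓ)}` for all `ε ∈ (0,1)`. -/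
theorem heuristic_upper_bound_scaling (p : ℝ) (hp : 2 ≤ p)
    (m ℓ : ℕ) (hℓ1 : 1 ≤ ℓ) (hℓm : ℓ ≤ m)
    (f : ℕ → ℕ) (hf : ∀ i ∈ Finset.Icc 1 ℓ, f i = 1 ∨ f i = 2)
    (kℓ : ℕ) (hk : kℓ = ((Finset.Icc 1 ℓ).filter (fun i => f i = 1)).card) :
    ∃ r : ℕ → ℝ → ℝ, ∃ C : ℝ, 0 < C ∧
      (∀ ε ∈ Set.Ioo (0 : ℝ) 1, r 0 ε = 1 ∧ ∀ i ≤ ℓ, 0 < r i ε) ∧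
      ∀ ε ∈ Set.Ioo (0 : ℝ) 1,
        ε * (r ℓ ε)⁻¹
          + (∑ i ∈ (Finset.Icc 1 ℓ).filter (fun i => f i = 1),
              (r i ε / r (i - 1) ε) ^ (2 * p))
          + (∑ i ∈ (Finset.Icc 1 ℓ).filter (fun i => f i = 2),
              (r i ε / r (i - 1) ε) ^ p)
        ≤ C * ε ^ (2 * p / (2 * p + 2 * ((ℓ : ℝ) - (kℓ : ℝ)) + (kℓ : ℝ))) :=
  heuristic_upper_bound_scaling_general p hp ℓ f kℓ hk
end

section
/- Let ξ ∈ ℝ^d \ {0} and let χ̂ ∈ ℂ^{d×d} be diagonal. Then |ξ|^{-4}|Σ_i χ̂_{ii} ξ_i²|² + Σ_i |χ̂_{ii}|² − 2|ξ|^{-2} Σ_i |χ̂_{ii}|² ξ_i² = |ξ|^{-4}( Σ_{i<j} |ξ_i² χ̂_{jj} + ξ_j² χ̂_{ii}|² + Σ_i Σ_{j≠i} Σ_{k≠i,j} ξ_k² ξ_j² |χ̂_{ii}|² ). -/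
/-!
Multiplied by `q² = |ξ|⁴` and with `aᵢ = ξᵢ²`, the identity holds for arbitrary real weights `aᵢ`
and vectors `χᵢ` of any real inner product space. Expanding `‖aᵢ χⱼ + aⱼ χᵢ‖²` splits the sum over
pairs `i < j` into a sum over ordered pairs `i ≠ j`, and the inner triple sum is
`aⱼ (q - aᵢ - aⱼ) ‖χᵢ‖²`; so for each `i` the right-hand side collapses to
`∑ⱼ aᵢ aⱼ ⟪χᵢ, χⱼ⟫ + (q² - 2 q aᵢ) ‖χᵢ‖²`, whose sum over `i` is the left-hand side.
-/

open Finset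

section
variable {ι : Type*} [Fintype ι]

theorem sum_filter_lt_add_swap [LinearOrder ι] {M : Type*} [AddCommMonoid M] (f : ι → ι → M) :
    ∑ i, ∑ j ∈ univ.filter (i < ·), (f i j + f j i) = ∑ i, ∑ j ∈ univ.erase i, f i j := by
  have swap : ∑ i, ∑ j ∈ univ.filter (i < ·), f j i = ∑ i, ∑ j ∈ univ.filter (· < i), f i j :=
    sum_comm' (fun _ _ => by simp)
  simp only [sum_add_distrib]
  rw [swap, ← sum_add_distrib]
  refine sum_congr rfl fun i _ => ?_
  rw [← sum_union (disjoint_filter.2 fun j _ h h' => lt_asymm h h')]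
  congr 1
  ext j
  simp [lt_or_lt_iff_ne, ne_comm]

variable {E : Type*} [NormedAddCommGroup E] [InnerProductSpace ℝ E]

theorem norm_smul_add_smul_sq (a b : ℝ) (x y : E) :
    ‖a • x + b • y‖ ^ 2
      = (b ^ 2 * ‖y‖ ^ 2 + b * a * inner ℝ x y) + (a ^ 2 * ‖x‖ ^ 2 + a * b * inner ℝ y x) := by
  rw [norm_add_sq_real, norm_smul, norm_smul, real_inner_smul_left, real_inner_smul_right,
    real_inner_comm x y, Real.norm_eq_abs, Real.norm_eq_abs, mul_pow, mul_pow, sq_abs, sq_abs]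
  ring

theorem norm_sum_smul_sq (a : ι → ℝ) (v : ι → E) :
    ‖∑ i, a i • v i‖ ^ 2 = ∑ i, ∑ j, a i * a j * inner ℝ (v i) (v j) := by
  rw [← real_inner_self_eq_norm_sq, sum_inner]
  simp only [inner_sum, real_inner_smul_left, real_inner_smul_right]
  exact sum_congr rfl fun i _ => sum_congr rfl fun j _ => by ring

theorem sum_erase_pair_add_triple_eq [DecidableEq ι] (a : ι → ℝ) (v : ι → E) (i : ι) :
    ∑ j ∈ univ.erase i, (a j ^ 2 * ‖v i‖ ^ 2 + a j * a i * inner ℝ (v j) (v i)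
        + ∑ k ∈ (univ.erase i).erase j, a k * a j * ‖v i‖ ^ 2)
      = ∑ j, a i * a j * inner ℝ (v i) (v j)
        + ((∑ k, a k) ^ 2 * ‖v i‖ ^ 2 - 2 * (∑ k, a k) * (‖v i‖ ^ 2 * a i)) := by
  have row : ∀ j ∈ univ.erase i, a j ^ 2 * ‖v i‖ ^ 2 + a j * a i * inner ℝ (v j) (v i)
        + ∑ k ∈ (univ.erase i).erase j, a k * a j * ‖v i‖ ^ 2
      = a i * a j * inner ℝ (v i) (v j) + (∑ k, a k - a i) * ‖v i‖ ^ 2 * a j := by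
    intro j hj
    rw [← sum_mul, ← sum_mul, sum_erase_eq_sub hj, sum_erase_eq_sub (mem_univ i),
      real_inner_comm]
    ring
  rw [sum_congr rfl row, sum_add_distrib, ← mul_sum, sum_erase_eq_sub (mem_univ i),
    sum_erase_eq_sub (mem_univ i), real_inner_self_eq_norm_sq]
  ring

theorem norm_sum_smul_sq_add_eq_sum_pairs_add_sum_triples [LinearOrder ι] (a : ι → ℝ)
    (v : ι → E) :
    ‖∑ i, a i • v i‖ ^ 2 + (∑ i, a i) ^ 2 * ∑ i, ‖v i‖ ^ 2
        - 2 * (∑ i, a i) * ∑ i, ‖v i‖ ^ 2 * a i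
      = ∑ i, ∑ j ∈ univ.filter (i < ·), ‖a i • v j + a j • v i‖ ^ 2
        + ∑ i, ∑ j ∈ univ.erase i, ∑ k ∈ (univ.erase i).erase j, a k * a j * ‖v i‖ ^ 2 := by
  have pairs : ∑ i, ∑ j ∈ univ.filter (i < ·), ‖a i • v j + a j • v i‖ ^ 2
      = ∑ i, ∑ j ∈ univ.erase i, (a j ^ 2 * ‖v i‖ ^ 2 + a j * a i * inner ℝ (v j) (v i)) := by
    simp only [norm_smul_add_smul_sq]
    exact sum_filter_lt_add_swap fun i j =>
      a j ^ 2 * ‖v i‖ ^ 2 + a j * a i * inner ℝ (v j) (v i)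
  simp only [pairs, ← sum_add_distrib, sum_erase_pair_add_triple_eq]
  rw [sum_add_distrib, sum_sub_distrib, ← mul_sum, ← mul_sum, norm_sum_smul_sq, add_sub_assoc]

end

/-- The key algebraic identity reformulating the pointwise minimal elastic energy in
Fourier space: for `ξ ∈ ℝ^d \ {0}` and a diagonal complex matrix with entries `χ_i`,
`|ξ|⁻⁴|Σ_i χ_i ξ_i²|² + Σ_i |χ_i|² − 2|ξ|⁻² Σ_i |χ_i|² ξ_i²
  = |ξ|⁻⁴(Σ_{i<j} |ξ_i² χ_j + ξ_j² χ_i|² + Σ_i Σ_{j≠i} Σ_{k≠i,j} ξ_k² ξ_j² |χ_i|²)`. -/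
theorem fourier_energy_identity {d : ℕ} (ξ : Fin d → ℝ) (hξ : ξ ≠ 0)
    (χ : Fin d → ℂ) :
    let q : ℝ := ∑ i, ξ i ^ 2
    (q ^ 2)⁻¹ * ‖∑ i, χ i * (ξ i : ℂ) ^ 2‖ ^ 2
        + (∑ i, ‖χ i‖ ^ 2)
        - 2 * q⁻¹ * ∑ i, ‖χ i‖ ^ 2 * ξ i ^ 2
      = (q ^ 2)⁻¹ *
        ((∑ i, ∑ j ∈ Finset.univ.filter (fun j => i < j),
            ‖(ξ i : ℂ) ^ 2 * χ j + (ξ j : ℂ) ^ 2 * χ i‖ ^ 2)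
          + ∑ i, ∑ j ∈ Finset.univ.erase i, ∑ k ∈ (Finset.univ.erase i).erase j,
              ξ k ^ 2 * ξ j ^ 2 * ‖χ i‖ ^ 2) := by
  intro q
  have hq : q ≠ 0 := by
    contrapose! hξ
    ext i
    simpa using (sum_eq_zero_iff_of_nonneg fun j _ => sq_nonneg (ξ j)).mp hξ i (mem_univ i)
  have key := norm_sum_smul_sq_add_eq_sum_pairs_add_sum_triples (fun i => ξ i ^ 2) χ
  simp only [Complex.real_smul, Complex.ofReal_pow] at key
  rw [← key]
  simp only [mul_comm (χ _)]
  field_simp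
  ring
end
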